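/- Let P1 be a SPARQL graph pattern and P2 a BGP. Then for every RDF graph G, ⟦FNE(P1,P2)⟧_G = {μ ∈ ⟦P1⟧_G | there is no μ' ∈ ⟦P2⟧_G with μ ∼ μ'}. -/

import Mathlib

/-!
Formalization of SPARQL graph-pattern syntax and semantics, following
Pérez et al. and the paper "SPARQL in N3".

* IRIs, blank nodes and literals are three pairwise disjoint infinite sets,
  packaged in the type `RTerm` (the set `T = I ∪ B ∪ L`).
* Variables form a further disjoint infinite set `Var`.
* A pattern term (`PTerm`) is an element of `T ∪ V`.
* A solution mapping is a partial function from variables to RDF terms,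
  modeled as `Var → Option RTerm`.
-/

namespace SparqlN3

/-- RDF terms: IRIs, blank nodes, literals — three disjoint infinite sets. -/
inductive RTerm : Type
  | iri : ℕ → RTerm
  | bnode : ℕ → RTerm
  | lit : ℕ → RTerm
deriving DecidableEq

/-- Variables (an infinite set, disjoint from `RTerm` by typing). -/
abbrev Var : Type := ℕ

/-- Elements of `T ∪ V`. -/
abbrev PTerm : Type := RTerm ⊕ Var

/-- Triple patterns: elements of `(T ∪ V) × (T ∪ V) × (T ∪ V)`. -/
abbrev TriplePat : Type := PTerm × PTerm × PTerm

/-- Ground RDF triples. -/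
abbrev Triple : Type := RTerm × RTerm × RTerm

/-- An RDF graph: a set of triples. -/
abbrev Graph : Type := Set Triple

/-- A basic graph pattern: a finite set of triple patterns. -/
abbrev BGP : Type := Finset TriplePat

/-- A (partial) mapping from variables to RDF terms. -/
abbrev Mapping : Type := Var → Option RTerm

/-- The domain of a mapping. -/
def mdom (μ : Mapping) : Set Var := {x | μ x ≠ none}

/-- A solution mapping has a finite domain. -/
def FiniteDom (μ : Mapping) : Prop := (mdom μ).Finite

/-- Compatibility of two mappings: they agree on the common domain. -/
def compat (μ₁ μ₂ : Mapping) : Prop :=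
  ∀ x a b, μ₁ x = some a → μ₂ x = some b → a = b

/-- Union `μ₁ ∪ μ₂` of two (compatible) mappings. -/
def munion (μ₁ μ₂ : Mapping) : Mapping :=
  fun x => (μ₁ x).elim (μ₂ x) some

def varsPT : PTerm → Finset Var
  | .inl _ => ∅
  | .inr v => {v}

/-- Variables of a triple pattern. -/
def varsTP (t : TriplePat) : Finset Var :=
  varsPT t.1 ∪ varsPT t.2.1 ∪ varsPT t.2.2

/-- Variables of a BGP. -/
def varsBGP (P : BGP) : Finset Var := P.biUnion varsTP

/-- Substitution on a pattern term: replace variables in the domain of `μ`. -/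
def substPT (μ : Mapping) : PTerm → PTerm
  | .inl t => .inl t
  | .inr v => (μ v).elim (.inr v) .inl

/-- Substitution `tμ` on a triple pattern (componentwise). -/
def substTP (μ : Mapping) (t : TriplePat) : TriplePat :=
  (substPT μ t.1, substPT μ t.2.1, substPT μ t.2.2)

/-- Substitution `Pμ` on a BGP (literal replacement of variables in `dom μ`). -/
def substBGP (μ : Mapping) (P : BGP) : BGP := P.image (substTP μ)

/-- View a ground triple as a triple pattern. -/
def toPat (t : Triple) : TriplePat := (.inl t.1, .inl t.2.1, .inl t.2.2)

/-- `InstIn G μ P` : the instantiation `Pμ` is contained in `G`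
(every triple pattern of `P` becomes, under `μ`, a ground triple of `G`). -/
def InstIn (G : Graph) (μ : Mapping) (P : BGP) : Prop :=
  ∀ tp ∈ P, ∃ t ∈ G, substTP μ tp = toPat t

/-- Evaluation of a BGP: `⟦P⟧_G = {μ | dom(μ) = var(P) ∧ Pμ ⊆ G}`. -/
def bgpEval (G : Graph) (P : BGP) : Set Mapping :=
  {μ | mdom μ = ↑(varsBGP P) ∧ InstIn G μ P}

/-- SPARQL graph patterns.  Filter conditions are modeled as predicates
on solution mappings. -/
inductive GP : Type
  | bgp : BGP → GP
  | and : GP → GP → GP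
  | union : GP → GP → GP
  | minus : GP → GP → GP
  | fe : GP → GP → GP
  | fne : GP → GP → GP
  | filter : GP → (Mapping → Prop) → GP
  | opt : GP → GP → (Mapping → Prop) → GP

/-- Substitution `Pμ` on a graph pattern, applied componentwise to triple
patterns and recursively through the constructors; for filters, the
predicate is composed with `μ`. -/
def substGP (μ : Mapping) : GP → GP
  | .bgp P => .bgp (substBGP μ P)
  | .and P₁ P₂ => .and (substGP μ P₁) (substGP μ P₂)
  | .union P₁ P₂ => .union (substGP μ P₁) (substGP μ P₂)
  | .minus P₁ P₂ => .minus (substGP μ P₁) (substGP μ P₂)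
  | .fe P₁ P₂ => .fe (substGP μ P₁) (substGP μ P₂)
  | .fne P₁ P₂ => .fne (substGP μ P₁) (substGP μ P₂)
  | .filter P R => .filter (substGP μ P) (fun ν => R (munion μ ν))
  | .opt P₁ P₂ R => .opt (substGP μ P₁) (substGP μ P₂) (fun ν => R (munion μ ν))

/-- Structural depth (used as termination measure for `eval`). -/
def depth : GP → ℕ
  | .bgp _ => 0
  | .and P₁ P₂ => max (depth P₁) (depth P₂) + 1
  | .union P₁ P₂ => max (depth P₁) (depth P₂) + 1
  | .minus P₁ P₂ => max (depth P₁) (depth P₂) + 1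
  | .fe P₁ P₂ => max (depth P₁) (depth P₂) + 1
  | .fne P₁ P₂ => max (depth P₁) (depth P₂) + 1
  | .filter P _ => depth P + 1
  | .opt P₁ P₂ _ => max (depth P₁) (depth P₂) + 1

theorem depth_substGP (μ : Mapping) (P : GP) : depth (substGP μ P) = depth P := by
  induction P <;> simp [substGP, depth, *]

/-- The scope `sv` of a graph pattern. -/
def sv : GP → Finset Var
  | .bgp P => varsBGP P
  | .and P₁ P₂ => sv P₁ ∪ sv P₂
  | .union P₁ P₂ => sv P₁ ∪ sv P₂
  | .minus P₁ _ => sv P₁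
  | .fe P₁ _ => sv P₁
  | .fne P₁ _ => sv P₁
  | .filter P _ => sv P
  | .opt P₁ P₂ _ => sv P₁ ∪ sv P₂

/-- The variables `var(P)` occurring in a graph pattern. -/
def varsGP : GP → Finset Var
  | .bgp P => varsBGP P
  | .and P₁ P₂ => varsGP P₁ ∪ varsGP P₂
  | .union P₁ P₂ => varsGP P₁ ∪ varsGP P₂
  | .minus P₁ P₂ => varsGP P₁ ∪ varsGP P₂
  | .fe P₁ P₂ => varsGP P₁ ∪ varsGP P₂
  | .fne P₁ P₂ => varsGP P₁ ∪ varsGP P₂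
  | .filter P _ => varsGP P
  | .opt P₁ P₂ _ => varsGP P₁ ∪ varsGP P₂

/-- Evaluation `⟦P⟧_G` of SPARQL graph patterns over an RDF graph `G`. -/
def eval (G : Graph) : GP → Set Mapping
  | .bgp P => bgpEval G P
  | .and P₁ P₂ =>
      {μ | ∃ μ₁ ∈ eval G P₁, ∃ μ₂ ∈ eval G P₂, compat μ₁ μ₂ ∧ μ = munion μ₁ μ₂}
  | .union P₁ P₂ => eval G P₁ ∪ eval G P₂
  | .minus P₁ P₂ =>
      {μ ∈ eval G P₁ | ∀ μ' ∈ eval G P₂, ¬ compat μ μ' ∨ mdom μ ∩ mdom μ' = ∅}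
  | .fe P₁ P₂ =>
      {μ ∈ eval G P₁ | (eval G (substGP μ P₂)).Nonempty}
  | .fne P₁ P₂ =>
      {μ ∈ eval G P₁ | eval G (substGP μ P₂) = ∅}
  | .filter P R => {μ ∈ eval G P | R μ}
  | .opt P₁ P₂ R =>
      {μ | ∃ μ₁ ∈ eval G P₁, ∃ μ₂ ∈ eval G P₂,
          compat μ₁ μ₂ ∧ R (munion μ₁ μ₂) ∧ μ = munion μ₁ μ₂}
        ∪ {μ₁ ∈ eval G P₁ | ¬ ∃ μ₂ ∈ eval G P₂, compat μ₁ μ₂ ∧ R (munion μ₁ μ₂)}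
termination_by P => depth P
decreasing_by all_goals (simp [depth_substGP, depth]; try omega)

/-- A pattern contains no UNION and no OPT subpattern. -/
def NoUnionOpt : GP → Prop
  | .bgp _ => True
  | .and P₁ P₂ => NoUnionOpt P₁ ∧ NoUnionOpt P₂
  | .union _ _ => False
  | .minus P₁ P₂ => NoUnionOpt P₁ ∧ NoUnionOpt P₂
  | .fe P₁ P₂ => NoUnionOpt P₁ ∧ NoUnionOpt P₂
  | .fne P₁ P₂ => NoUnionOpt P₁ ∧ NoUnionOpt P₂
  | .filter P _ => NoUnionOpt P
  | .opt _ _ _ => False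

/-- Renaming of variables in a pattern term. -/
def renamePT (σ : Var → Var) : PTerm → PTerm
  | .inl t => .inl t
  | .inr v => .inr (σ v)

/-- Renaming of variables in a triple pattern. -/
def renameTP (σ : Var → Var) (t : TriplePat) : TriplePat :=
  (renamePT σ t.1, renamePT σ t.2.1, renamePT σ t.2.2)

/-- Renaming `Qσ` of variables in a BGP. -/
def renameBGP (σ : Var → Var) (P : BGP) : BGP := P.image (renameTP σ)

/-- Restriction of a mapping to a set of variables. -/
def restrict (μ : Mapping) (S : Finset Var) : Mapping :=
  fun x => if x ∈ S then μ x else none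

/-!
A solution `ν` of `P₂μ` lives on the variables of `P₂` outside `dom μ`, so `μ ∪ ν`, cut down to
`var(P₂)`, is a solution of `P₂` compatible with `μ`. Conversely, if `μ'` solves `P₂` and `μ ∼ μ'`,
then `μ'` restricted to `var(P₂μ)` solves `P₂μ`: together with `μ` it agrees with `μ'` on `var(P₂)`.
-/

lemma mdom_munion (μ ν : Mapping) : mdom (munion μ ν) = mdom μ ∪ mdom ν := by
  ext x
  cases h : μ x <;> simp [mdom, munion, h]

lemma mdom_restrict (μ : Mapping) (S : Finset Var) : mdom (restrict μ S) = mdom μ ∩ S := by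
  ext x
  by_cases hx : x ∈ S <;> simp [mdom, restrict, hx]

lemma restrict_eqOn (μ : Mapping) (S : Finset Var) : Set.EqOn (restrict μ S) μ S :=
  fun _ hx => if_pos hx

lemma compat_restrict_right {μ ν : Mapping} (h : compat μ ν) (S : Finset Var) :
    compat μ (restrict ν S) := by
  intro x a b ha hb
  by_cases hx : x ∈ S
  · exact h x a b ha (by simpa [restrict, hx] using hb)
  · simp [restrict, hx] at hb

lemma compat_munion_self (μ ν : Mapping) : compat μ (munion μ ν) := by
  intro x a b ha hb
  simpa [munion, ha] using hb

lemma mem_varsPT_substPT (μ : Mapping) (p : PTerm) (x : Var) :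
    x ∈ varsPT (substPT μ p) ↔ x ∈ varsPT p ∧ μ x = none := by
  rcases p with t | v
  · simp [substPT, varsPT]
  · cases h : μ v
    · simp [substPT, varsPT, h, and_iff_left_of_imp (fun hx : x = v => hx ▸ h)]
    · simp only [substPT, varsPT, h, Option.elim, Finset.notMem_empty, Finset.mem_singleton,
        false_iff, not_and]
      rintro rfl
      simp [h]

lemma mem_varsTP_substTP (μ : Mapping) (t : TriplePat) (x : Var) :
    x ∈ varsTP (substTP μ t) ↔ x ∈ varsTP t ∧ μ x = none := by
  simp only [varsTP, substTP, Finset.mem_union, mem_varsPT_substPT]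
  tauto

lemma mem_varsBGP_substBGP (μ : Mapping) (P : BGP) (x : Var) :
    x ∈ varsBGP (substBGP μ P) ↔ x ∈ varsBGP P ∧ μ x = none := by
  simp only [varsBGP, substBGP, Finset.mem_biUnion, Finset.exists_mem_image, mem_varsTP_substTP]
  tauto

lemma varsBGP_substBGP_subset (μ : Mapping) (P : BGP) : varsBGP (substBGP μ P) ⊆ varsBGP P :=
  fun x hx => ((mem_varsBGP_substBGP μ P x).1 hx).1

lemma substTP_substTP (μ ν : Mapping) (t : TriplePat) :
    substTP ν (substTP μ t) = substTP (munion μ ν) t := by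
  have key (p : PTerm) : substPT ν (substPT μ p) = substPT (munion μ ν) p := by
    rcases p with t | v
    · rfl
    · cases h : μ v <;> simp [substPT, munion, h]
  simp [substTP, key]

lemma substTP_congr {μ₁ μ₂ : Mapping} {t : TriplePat} (h : Set.EqOn μ₁ μ₂ (varsTP t)) :
    substTP μ₁ t = substTP μ₂ t := by
  have key (p : PTerm) (hp : varsPT p ⊆ varsTP t) : substPT μ₁ p = substPT μ₂ p := by
    rcases p with t | v
    · rfl
    · simp [substPT, h (hp (Finset.mem_singleton_self v))]
  simp only [substTP]
  rw [key t.1 (by simp [varsTP]), key t.2.1 (by intro; simp [varsTP]; tauto),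
    key t.2.2 (by intro; simp [varsTP]; tauto)]

lemma instIn_congr {G : Graph} {μ₁ μ₂ : Mapping} {P : BGP} (h : Set.EqOn μ₁ μ₂ (varsBGP P)) :
    InstIn G μ₁ P ↔ InstIn G μ₂ P := by
  refine forall₂_congr fun tp htp => ?_
  have hvars : (varsTP tp : Set Var) ⊆ varsBGP P :=
    Finset.coe_subset.2 (Finset.subset_biUnion_of_mem varsTP htp)
  rw [substTP_congr (h.mono hvars)]

lemma instIn_substBGP_iff (G : Graph) (μ ν : Mapping) (P : BGP) :
    InstIn G ν (substBGP μ P) ↔ InstIn G (munion μ ν) P := by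
  simp only [InstIn, substBGP, Finset.forall_mem_image, substTP_substTP]

section Solutions

variable {G : Graph} {μ : Mapping} {P : BGP}

lemma exists_compat_of_mem_bgpEval_substBGP {ν : Mapping} (hν : ν ∈ bgpEval G (substBGP μ P)) :
    ∃ μ' ∈ bgpEval G P, compat μ μ' := by
  obtain ⟨hdom, hinst⟩ := hν
  refine ⟨restrict (munion μ ν) (varsBGP P), ⟨?_, ?_⟩,
    compat_restrict_right (compat_munion_self μ ν) _⟩
  · have hcover : (varsBGP P : Set Var) ⊆ mdom μ ∪ mdom ν := by
      intro x hx
      by_cases hμx : μ x = none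
      · right
        rw [hdom]
        exact (mem_varsBGP_substBGP μ P x).2 ⟨hx, hμx⟩
      · exact Or.inl hμx
    rw [mdom_restrict, mdom_munion, Set.inter_eq_right.2 hcover]
  · exact (instIn_congr (restrict_eqOn _ _)).2 ((instIn_substBGP_iff G μ ν P).1 hinst)

lemma restrict_mem_bgpEval_substBGP {μ' : Mapping} (hμ' : μ' ∈ bgpEval G P)
    (hcompat : compat μ μ') :
    restrict μ' (varsBGP (substBGP μ P)) ∈ bgpEval G (substBGP μ P) := by
  obtain ⟨hdom, hinst⟩ := hμ'
  set ν := restrict μ' (varsBGP (substBGP μ P)) with hν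
  refine ⟨?_, ?_⟩
  · rw [mdom_restrict, hdom,
      Set.inter_eq_right.2 (Finset.coe_subset.2 (varsBGP_substBGP_subset μ P))]
  · have hagree : Set.EqOn (munion μ ν) μ' (varsBGP P) := by
      intro x hx
      cases hμx : μ x with
      | none =>
        have hxν : x ∈ varsBGP (substBGP μ P) := (mem_varsBGP_substBGP μ P x).2 ⟨hx, hμx⟩
        simp [munion, hμx, hν, restrict, hxν]
      | some a =>
        have hxμ' : x ∈ mdom μ' := by rwa [hdom]
        obtain ⟨b, hb⟩ := Option.ne_none_iff_exists'.1 hxμ'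
        simp [munion, hμx, hb, hcompat x a b hμx hb]
    exact (instIn_substBGP_iff G μ ν P).2 ((instIn_congr hagree).2 hinst)

theorem bgpEval_substBGP_nonempty_iff :
    (bgpEval G (substBGP μ P)).Nonempty ↔ ∃ μ' ∈ bgpEval G P, compat μ μ' :=
  ⟨fun ⟨_, hν⟩ => exists_compat_of_mem_bgpEval_substBGP hν,
    fun ⟨_, hμ', hcompat⟩ => ⟨_, restrict_mem_bgpEval_substBGP hμ' hcompat⟩⟩

end Solutions

/-- For a graph pattern `P₁` and a BGP `P₂`,
`⟦FNE(P₁,P₂)⟧_G = {μ ∈ ⟦P₁⟧_G | ¬∃ μ' ∈ ⟦P₂⟧_G, μ ∼ μ'}`. -/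
theorem fne_eval_eq (P₁ : GP) (P₂ : BGP) (G : Graph) :
    eval G (.fne P₁ (.bgp P₂)) =
      {μ ∈ eval G P₁ | ¬ ∃ μ' ∈ bgpEval G P₂, compat μ μ'} := by
  ext μ
  simp only [eval, substGP, ← Set.not_nonempty_iff_eq_empty,
    bgpEval_substBGP_nonempty_iff]

end SparqlN3
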